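/- arXiv:2312.12110 — 7 statements merged into one kernel-verified Lean document; each statement's English description precedes it below -/
import Mathlib

section
/- For a vertex subset C of the triangular grid graph T_n that is the initial segment of the simplicial ordering, if 1+2+...+l < |C| ≤ 1+2+...+(l+1) with l+1 ≤ n, then the vertex boundary of C in T_n has exactly l+2 vertices. -/
/-- Vertex set of the triangular grid graph `T_n`. -/
def TnV (n : ℕ) : Finset (ℕ × ℕ) :=
  (Finset.range (n+1) ×ˢ Finset.range (n+1)).filter (fun v => v.1 + v.2 ≤ n)

/-- Adjacency in the triangular grid graph. -/
def adj (u v : ℕ × ℕ) : Prop :=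
  (v.1 = u.1 + 1 ∧ v.2 = u.2) ∨ (u.1 = v.1 + 1 ∧ u.2 = v.2) ∨
  (v.2 = u.2 + 1 ∧ v.1 = u.1) ∨ (u.2 = v.2 + 1 ∧ u.1 = v.1) ∨
  (v.1 = u.1 + 1 ∧ u.2 = v.2 + 1) ∨ (u.1 = v.1 + 1 ∧ v.2 = u.2 + 1)

instance : ∀ u v : ℕ × ℕ, Decidable (adj u v) := fun u v => by
  unfold adj; infer_instance

/-- The (exterior) vertex boundary of `A` in `T_n`. -/
def boundary (n : ℕ) (A : Finset (ℕ × ℕ)) : Finset (ℕ × ℕ) :=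
  (TnV n).filter (fun v => v ∉ A ∧ ∃ u ∈ A, adj u v)

/-- The neighborhood `N(A)` of `A` in `T_n`. -/
def nbhd (n : ℕ) (A : Finset (ℕ × ℕ)) : Finset (ℕ × ℕ) :=
  (TnV n).filter (fun v => v ∈ A ∨ ∃ u ∈ A, adj u v)

/-- `sle u v` : `u` comes before (or equals) `v` in the simplicial ordering. -/
def sle (u v : ℕ × ℕ) : Prop :=
  u.1 + u.2 < v.1 + v.2 ∨ (u.1 + u.2 = v.1 + v.2 ∧ v.1 ≤ u.1)

/-- `C` is an initial segment of the simplicial ordering on `V(T_n)`. -/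
def IsInitSeg (n : ℕ) (C : Finset (ℕ × ℕ)) : Prop :=
  C ⊆ TnV n ∧ ∀ v ∈ C, ∀ u ∈ TnV n, sle u v → u ∈ C

/-- `D` is a final segment of the simplicial ordering on `V(T_n)`. -/
def IsFinalSeg (n : ℕ) (D : Finset (ℕ × ℕ)) : Prop :=
  D ⊆ TnV n ∧ ∀ v ∈ D, ∀ u ∈ TnV n, sle v u → u ∈ D

lemma tnv_mem (n a b : ℕ) : (a, b) ∈ TnV n ↔ a + b ≤ n := by
  simp [TnV, Finset.mem_filter, Finset.mem_product]
  omega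

lemma tnv_count (n k : ℕ) (h : k ≤ n) :
    ((TnV n).filter (fun v => v.1 + v.2 ≤ k)).card = ∑ i ∈ Finset.range (k+2), i := by
  have heq : (TnV n).filter (fun v => v.1 + v.2 ≤ k)
      = (Finset.range (k+1)).biUnion (fun a => {a} ×ˢ Finset.range (k+1-a)) := by
    ext ⟨a, b⟩
    simp [TnV, Finset.mem_filter, Finset.mem_product, Finset.mem_biUnion, Finset.mem_range]
    omega
  rw [heq, Finset.card_biUnion]
  · have h1 : ∀ a ∈ Finset.range (k+1), ({a} ×ˢ Finset.range (k+1-a)).card = (k+1-a) := by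
      intro a _
      simp
    rw [Finset.sum_congr rfl h1]
    have h2 : ∀ a ∈ Finset.range (k+1), k+1-a = k - a + 1 := by
      intro a ha; rw [Finset.mem_range] at ha; omega
    rw [Finset.sum_congr rfl h2]
    have h3 := Finset.sum_range_reflect (fun j => j + 1) (k+1)
    simp only [Nat.add_sub_cancel] at h3
    rw [h3]
    have h4 := Finset.sum_range_succ' (fun i => i) (k+1)
    simp only [Nat.add_zero] at h4
    rw [h4]
  · intro x hx y hy hxy
    simp only [Finset.disjoint_left, Finset.mem_product, Finset.mem_singleton]
    rintro ⟨a, b⟩ ⟨rfl, -⟩ ⟨rfl, -⟩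
    exact hxy rfl

theorem initial_segment_boundary (n l : ℕ) (C : Finset (ℕ × ℕ))
    (hC : IsInitSeg n C)
    (h1 : ∑ i ∈ Finset.range (l+1), i < C.card)
    (h2 : C.card ≤ ∑ i ∈ Finset.range (l+2), i)
    (hl : l + 1 ≤ n) :
    (boundary n C).card = l + 2 := by
  obtain ⟨hCsub, hCdc⟩ := hC
  -- there is a vertex of C of level ≥ l
  have hx : ∃ v ∈ C, l ≤ v.1 + v.2 := by
    rcases Nat.eq_zero_or_pos l with hl0 | hl0
    · have hpos : 0 < C.card := lt_of_le_of_lt (Nat.zero_le _) h1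
      obtain ⟨v, hv⟩ := Finset.card_pos.mp hpos
      exact ⟨v, hv, by omega⟩
    · by_contra hcon
      push_neg at hcon
      have hsub : C ⊆ (TnV n).filter (fun v => v.1 + v.2 ≤ l - 1) := by
        intro v hv
        exact Finset.mem_filter.mpr ⟨hCsub hv, by have := hcon v hv; omega⟩
      have hle := Finset.card_le_card hsub
      rw [tnv_count n (l-1) (by omega)] at hle
      have : l - 1 + 2 = l + 1 := by omega
      rw [this] at hle
      omega
  obtain ⟨v0, hv0, hv0l⟩ := hx
  -- (l, 0) ∈ C
  have hl0c : (l, 0) ∈ C := by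
    apply hCdc v0 hv0 (l, 0) ((tnv_mem n l 0).mpr (by omega))
    simp only [sle]
    omega
  -- all vertices of level < l are in C
  have hlow : ∀ a b : ℕ, a + b < l → (a, b) ∈ C := by
    intro a b hab
    apply hCdc (l, 0) hl0c (a, b) ((tnv_mem n a b).mpr (by omega))
    simp only [sle]
    omega
  -- all vertices of C have level ≤ l
  have hup : ∀ v ∈ C, v.1 + v.2 ≤ l := by
    by_contra hcon
    push_neg at hcon
    obtain ⟨v, hv, hgt⟩ := hcon
    have hsub : (TnV n).filter (fun u => u.1 + u.2 ≤ l) ⊆ C := by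
      intro u hu
      rw [Finset.mem_filter] at hu
      apply hCdc v hv u hu.1
      simp only [sle]
      omega
    have hvnot : v ∉ (TnV n).filter (fun u => u.1 + u.2 ≤ l) := by
      rw [Finset.mem_filter]
      push_neg
      intro _; omega
    have hss : (TnV n).filter (fun u => u.1 + u.2 ≤ l) ⊂ C :=
      ⟨hsub, fun h => hvnot (h hv)⟩
    have := Finset.card_lt_card hss
    rw [tnv_count n l (by omega)] at this
    omega
  -- the level-l slice and its set of second coordinates
  set S := C.filter (fun v => v.1 + v.2 = l) with hS
  set J := S.image Prod.snd with hJ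
  have hJcard : J.card = S.card := by
    apply Finset.card_image_of_injOn
    intro u hu v hv huv
    simp only [hS, Finset.mem_coe, Finset.mem_filter] at hu hv
    have : u.1 = v.1 := by omega
    exact Prod.ext this huv
  have hJdc : ∀ j ∈ J, ∀ i, i ≤ j → i ∈ J := by
    intro j hj i hij
    rw [hJ, Finset.mem_image] at hj
    obtain ⟨v, hv, hvj⟩ := hj
    rw [hS, Finset.mem_filter] at hv
    obtain ⟨hvC, hvl⟩ := hv
    have hjl : j ≤ l := by omega
    have hu : (l - i, i) ∈ C := by
      apply hCdc v hvC (l - i, i) ((tnv_mem n _ _).mpr (by omega))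
      simp only [sle]
      omega
    rw [hJ, Finset.mem_image]
    refine ⟨(l - i, i), ?_, rfl⟩
    rw [hS, Finset.mem_filter]
    exact ⟨hu, by simp; omega⟩
  set m := J.card with hm
  have hJr : ∀ j, j ∈ J ↔ j < m := by
    intro j
    constructor
    · intro hj
      have hsub : Finset.range (j+1) ⊆ J := by
        intro i hi
        rw [Finset.mem_range] at hi
        exact hJdc j hj i (by omega)
      have := Finset.card_le_card hsub
      simp at this
      omega
    · intro hj
      by_contra hjJ
      have hsub : J ⊆ Finset.range j := by
        intro x hx
        rw [Finset.mem_range]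
        by_contra hxj
        exact hjJ (hJdc x hx j (by omega))
      have := Finset.card_le_card hsub
      simp at this
      omega
  have hm1 : 1 ≤ m := by
    have : (0 : ℕ) ∈ J := by
      rw [hJ, Finset.mem_image]
      refine ⟨(l, 0), ?_, rfl⟩
      rw [hS, Finset.mem_filter]
      exact ⟨hl0c, by simp⟩
    rw [hJr] at this
    omega
  have hm2 : m ≤ l + 1 := by
    have hsub : J ⊆ Finset.range (l+1) := by
      intro x hx
      rw [hJ, Finset.mem_image] at hx
      obtain ⟨v, hv, hvx⟩ := hx
      rw [hS, Finset.mem_filter] at hv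
      rw [Finset.mem_range]
      omega
    have := Finset.card_le_card hsub
    simp at this
    omega
  -- characterization of C
  have hmem : ∀ a b : ℕ, (a, b) ∈ C ↔ (a + b < l ∨ (a + b = l ∧ b < m)) := by
    intro a b
    constructor
    · intro hv
      have := hup (a, b) hv
      rcases Nat.lt_or_ge (a + b) l with h | h
      · exact Or.inl h
      · have habl : a + b = l := by omega
        have : b ∈ J := by
          rw [hJ, Finset.mem_image]
          exact ⟨(a, b), by rw [hS, Finset.mem_filter]; exact ⟨hv, habl⟩, rfl⟩
        rw [hJr] at this
        exact Or.inr ⟨habl, this⟩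
    · rintro (h | ⟨h, hb⟩)
      · exact hlow a b h
      · have : b ∈ J := (hJr b).mpr hb
        rw [hJ, Finset.mem_image] at this
        obtain ⟨v, hv, hvb⟩ := this
        rw [hS, Finset.mem_filter] at hv
        have : v = (a, b) := by
          have h1 : v.2 = b := hvb
          have h2 : v.1 + v.2 = l := hv.2
          have : v.1 = a := by omega
          exact Prod.ext this h1
        rw [← this]
        exact hv.1
  -- boundary as an image
  have key : boundary n C =
      Finset.image (fun i => if i ≤ m then (l+1-i, i) else (l+1-i, i-1)) (Finset.range (l+2)) := by
    ext v
    obtain ⟨a, b⟩ := v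
    simp only [boundary, Finset.mem_filter, Finset.mem_image, Finset.mem_range, tnv_mem]
    constructor
    · rintro ⟨hvT, hvC, u, huC, hadj⟩
      obtain ⟨c, d⟩ := u
      rw [hmem] at huC hvC
      simp only [adj] at hadj
      have hkey : (a + b = l + 1 ∧ b ≤ m) ∨ (a + b = l ∧ m ≤ b ∧ b ≤ l) := by omega
      rcases hkey with ⟨h, hb⟩ | ⟨h, hb, hbl⟩
      · refine ⟨b, by omega, ?_⟩
        rw [if_pos hb]
        simp only [Prod.mk.injEq]
        exact ⟨by omega, trivial⟩
      · refine ⟨b + 1, by omega, ?_⟩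
        rw [if_neg (by omega)]
        simp only [Prod.mk.injEq]
        omega
    · rintro ⟨i, hi, hfi⟩
      by_cases him : i ≤ m
      · rw [if_pos him] at hfi
        simp only [Prod.mk.injEq] at hfi
        obtain ⟨ha, hb⟩ := hfi
        have habl : a + b = l + 1 := by omega
        refine ⟨by omega, ?_, ?_⟩
        · rw [hmem]; omega
        · rcases Nat.eq_zero_or_pos i with hi0 | hi0
          · refine ⟨(l, 0), ?_, ?_⟩
            · rw [hmem]; omega
            · simp only [adj, Prod.mk.injEq]
              omega
          · refine ⟨(l+1-i, i-1), ?_, ?_⟩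
            · rw [hmem]; omega
            · simp only [adj]
              omega
      · rw [if_neg him] at hfi
        simp only [Prod.mk.injEq] at hfi
        obtain ⟨ha, hb⟩ := hfi
        have habl : a + b = l := by omega
        refine ⟨by omega, ?_, ?_⟩
        · rw [hmem]; omega
        · refine ⟨(l+1-i, i-2), ?_, ?_⟩
          · rw [hmem]; omega
          · simp only [adj]
            omega
  rw [key]
  rw [Finset.card_image_of_injOn]
  · simp
  · intro i hi j hj hij
    rw [Finset.mem_coe, Finset.mem_range] at hi hj
    simp only at hij
    split_ifs at hij <;> (rw [Prod.mk.injEq] at hij; omega)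
end

section
/- For any subset A of the vertices of the triangular grid graph T_n, the neighborhood of the 1-left-compression of A is no larger than the neighborhood of A: |N(C₁⁻(A))| ≤ |N(A)|. -/
/-- The 1-left-compression: pushes the vertices in each column downward. -/
def comp1 (A : Finset (ℕ × ℕ)) : Finset (ℕ × ℕ) :=
  (A.image Prod.fst).biUnion (fun t =>
    (Finset.range ((A.filter (fun u => u.1 = t)).card)).image (fun y => (t, y)))

/-- The 2-left-compression: pushes the vertices in each row to the left. -/
def comp2 (A : Finset (ℕ × ℕ)) : Finset (ℕ × ℕ) :=
  (A.image Prod.snd).biUnion (fun t =>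
    (Finset.range ((A.filter (fun u => u.2 = t)).card)).image (fun x => (x, t)))

/-!
Both neighbourhoods are counted column by column. The column of `N(B)` at `t` is determined by
the columns `L, S, R` of `B` at `t - 1, t, t + 1`: it is `(L ∪ (L - 1)) ∪ (S ∪ (S ± 1)) ∪ (R ∪ (R + 1))`,
cut at height `n - t`. After compression the three pieces are initial segments of `ℕ`, so their
union is as large as the largest of them, and no piece grows under compression: `X ∪ (X - 1)` is
strictly larger than `X` unless `X` is an initial segment, and `X ∪ (X + 1)` is strictly larger
than any nonempty `X`.
-/

open Finset

lemma card_union_le_card_union_of_total {α : Type*} [DecidableEq α] {X₁ X₂ Y₁ Y₂ : Finset α}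
    (hX : X₁ ⊆ X₂ ∨ X₂ ⊆ X₁) (h₁ : #X₁ ≤ #Y₁) (h₂ : #X₂ ≤ #Y₂) : #(X₁ ∪ X₂) ≤ #(Y₁ ∪ Y₂) := by
  rcases hX with hX | hX
  · rw [union_eq_right.2 hX]; exact h₂.trans (card_le_card subset_union_right)
  · rw [union_eq_left.2 hX]; exact h₁.trans (card_le_card subset_union_left)

lemma subset_or_subset_of_isLowerSet {α : Type*} [LinearOrder α] {X Y : Finset α}
    (hX : IsLowerSet (X : Set α)) (hY : IsLowerSet (Y : Set α)) : X ⊆ Y ∨ Y ⊆ X := by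
  simpa only [coe_subset] using hX.total hY

lemma isLowerSet_coe_range (m : ℕ) : IsLowerSet (range m : Set ℕ) := by
  rw [coe_range]; exact isLowerSet_Iio m

section Path

def extendUp (S : Finset ℕ) : Finset ℕ := S ∪ S.image (· + 1)

/-- Since `0 - 1 = 0` in `ℕ`, the image contributes nothing new at `0`. -/
def extendDown (S : Finset ℕ) : Finset ℕ := S ∪ S.image (· - 1)

def pathNbhd (S : Finset ℕ) : Finset ℕ := extendDown S ∪ extendUp S

variable {S : Finset ℕ} {m : ℕ}

lemma extendUp_subset_range_succ (h : S ⊆ range m) : extendUp S ⊆ range (m + 1) := by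
  intro y hy
  simp only [extendUp, mem_union, mem_image] at hy
  rw [mem_range]
  rcases hy with hy | ⟨z, hz, rfl⟩
  · have := mem_range.1 (h hy); omega
  · have := mem_range.1 (h hz); omega

lemma extendDown_subset_range (h : S ⊆ range m) : extendDown S ⊆ range m := by
  intro y hy
  simp only [extendDown, mem_union, mem_image] at hy
  rcases hy with hy | ⟨z, hz, rfl⟩
  · exact h hy
  · have := mem_range.1 (h hz); rw [mem_range]; omega

lemma extendDown_range (m : ℕ) : extendDown (range m) = range m :=
  (extendDown_subset_range subset_rfl).antisymm subset_union_left

lemma card_lt_card_extendUp (h : S.Nonempty) : #S < #(extendUp S) := by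
  refine card_lt_card (ssubset_iff_of_subset subset_union_left |>.2 ⟨S.max' h + 1, ?_, ?_⟩)
  · exact mem_union_right _ (mem_image_of_mem _ (S.max'_mem h))
  · exact fun hm => by have := S.le_max' _ hm; omega

lemma eq_range_card_of_image_pred_subset (h : S.image (· - 1) ⊆ S) : S = range #S := by
  have hlower : IsLowerSet (S : Set ℕ) := by
    intro b a hab hb
    induction b, hab using Nat.le_induction with
    | base => exact hb
    | succ b _ ih => exact ih (h (mem_image_of_mem (· - 1) hb))
  rcases hlower.eq_univ_or_Iio with huniv | ⟨a, ha⟩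
  · exact absurd (huniv ▸ S.finite_toSet) Set.infinite_univ
  · rw [← coe_range, coe_inj] at ha
    rw [ha, card_range]

lemma card_lt_card_extendDown (h : S ≠ range #S) : #S < #(extendDown S) := by
  refine card_lt_card (Finset.ssubset_iff_subset_ne.2 ⟨subset_union_left, fun heq => h ?_⟩)
  have himage : S.image (· - 1) ⊆ extendDown S := subset_union_right
  rw [← heq] at himage
  exact eq_range_card_of_image_pred_subset himage

lemma isLowerSet_extendUp (h : IsLowerSet (S : Set ℕ)) : IsLowerSet (extendUp S : Set ℕ) := by
  intro b a hab hb
  simp only [extendUp, coe_union, coe_image, Set.mem_union, Set.mem_image, mem_coe] at hb ⊢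
  rcases hb with hb | ⟨z, hz, rfl⟩
  · exact Or.inl (h hab hb)
  · rcases Nat.lt_or_eq_of_le hab with hlt | rfl
    · exact Or.inl (h (Nat.le_of_lt_succ hlt) hz)
    · exact Or.inr ⟨z, hz, rfl⟩

lemma card_pathNbhd_range_inter_le {k : ℕ} (hS : S ⊆ range (k + 1)) :
    #(pathNbhd (range #S) ∩ range (k + 1)) ≤ #(pathNbhd S ∩ range (k + 1)) := by
  by_cases hSr : S = range #S
  · rw [← hSr]
  have hsub : pathNbhd (range #S) ⊆ range (#S + 1) := by
    refine union_subset ?_ (extendUp_subset_range_succ subset_rfl)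
    exact (extendDown_subset_range subset_rfl).trans (range_subset_range.2 (Nat.le_succ _))
  calc #(pathNbhd (range #S) ∩ range (k + 1)) ≤ #S + 1 := by
        simpa using card_le_card (inter_subset_left.trans hsub)
    _ ≤ #(extendDown S) := card_lt_card_extendDown hSr
    _ ≤ #(pathNbhd S ∩ range (k + 1)) :=
        card_le_card (subset_inter subset_union_left (extendDown_subset_range hS))

lemma card_extendDown_range_inter_le {k : ℕ} (hS : S ⊆ range (k + 2)) :
    #(extendDown (range #S) ∩ range (k + 1)) ≤ #(extendDown S ∩ range (k + 1)) := by
  by_cases hSr : S = range #S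
  · rw [← hSr]
  have hsplit : extendDown S ⊆ insert (k + 1) (extendDown S ∩ range (k + 1)) := by
    intro y hy
    have := mem_range.1 (extendDown_subset_range hS hy)
    rw [mem_insert, mem_inter, mem_range, and_iff_right hy]
    omega
  have hlt : #S < #(extendDown S ∩ range (k + 1)) + 1 :=
    (card_lt_card_extendDown hSr).trans_le ((card_le_card hsplit).trans (card_insert_le _ _))
  calc #(extendDown (range #S) ∩ range (k + 1)) ≤ #S := by
        simp [extendDown_range]
    _ ≤ #(extendDown S ∩ range (k + 1)) := Nat.le_of_lt_succ hlt

lemma card_extendUp_range_inter_le {k : ℕ} (hS : S ⊆ range k) :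
    #(extendUp (range #S) ∩ range (k + 1)) ≤ #(extendUp S ∩ range (k + 1)) := by
  rcases S.eq_empty_or_nonempty with rfl | hne
  · simp
  rw [inter_eq_left.2 (extendUp_subset_range_succ hS)]
  calc #(extendUp (range #S) ∩ range (k + 1)) ≤ #S + 1 := by
        simpa using card_le_card (inter_subset_left.trans (extendUp_subset_range_succ subset_rfl))
    _ ≤ #(extendUp S) := card_lt_card_extendUp hne

def nbhdColumn (k : ℕ) (L S R : Finset ℕ) : Finset ℕ :=
  (extendDown L ∪ pathNbhd S ∪ extendUp R) ∩ range (k + 1)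

lemma card_nbhdColumn_range_le {k : ℕ} {L R : Finset ℕ} (hL : L ⊆ range (k + 2))
    (hS : S ⊆ range (k + 1)) (hR : R ⊆ range k) :
    #(nbhdColumn k (range #L) (range #S) (range #R)) ≤ #(nbhdColumn k L S R) := by
  have hup (m : ℕ) : IsLowerSet (extendUp (range m) : Set ℕ) :=
    isLowerSet_extendUp (isLowerSet_coe_range m)
  have hdown (m : ℕ) : IsLowerSet (extendDown (range m) : Set ℕ) := by
    rw [extendDown_range]; exact isLowerSet_coe_range m
  have hcut {X : Finset ℕ} (hX : IsLowerSet (X : Set ℕ)) :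
      IsLowerSet ((X ∩ range (k + 1) : Finset ℕ) : Set ℕ) := by
    rw [coe_inter]; exact hX.inter (isLowerSet_coe_range _)
  have hpath : IsLowerSet (pathNbhd (range #S) : Set ℕ) := by
    rw [pathNbhd, coe_union]; exact (hdown _).union (hup _)
  simp only [nbhdColumn, union_inter_distrib_right]
  refine card_union_le_card_union_of_total ?_
    (card_union_le_card_union_of_total ?_ (card_extendDown_range_inter_le hL)
      (card_pathNbhd_range_inter_le hS)) (card_extendUp_range_inter_le hR)
  · refine subset_or_subset_of_isLowerSet ?_ (hcut (hup _))
    rw [coe_union]; exact (hcut (hdown _)).union (hcut hpath)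
  · exact subset_or_subset_of_isLowerSet (hcut (hdown _)) (hcut hpath)

end Path

section Grid

def column (B : Finset (ℕ × ℕ)) (t : ℕ) : Finset ℕ := (B.filter (·.1 = t)).image Prod.snd

/-- There is no column left of `0`: `column B (0 - 1)` would be column `0`. -/
def prevColumn (B : Finset (ℕ × ℕ)) (t : ℕ) : Finset ℕ := if t = 0 then ∅ else column B (t - 1)

variable {n t y : ℕ} {B : Finset (ℕ × ℕ)}

@[simp]
lemma mem_column : y ∈ column B t ↔ (t, y) ∈ B := by
  simp [column]

lemma mem_prevColumn : y ∈ prevColumn B t ↔ t ≠ 0 ∧ (t - 1, y) ∈ B := by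
  unfold prevColumn; split_ifs <;> simp [*]

lemma card_filter_fst_eq_card_column (B : Finset (ℕ × ℕ)) (t : ℕ) :
    #(B.filter (·.1 = t)) = #(column B t) := by
  refine (card_image_of_injOn fun u hu v hv huv => Prod.ext ?_ huv).symm
  rw [mem_coe, mem_filter] at hu hv
  rw [hu.2, hv.2]

lemma card_eq_sum_card_column (hB : B ⊆ TnV n) :
    #B = ∑ t ∈ range (n + 1), #(column B t) := by
  rw [card_eq_sum_card_fiberwise (f := Prod.fst) (t := range (n + 1))]
  · simp only [card_filter_fst_eq_card_column]
  · intro u hu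
    have := hB hu
    simp only [TnV, mem_filter, mem_product] at this
    exact this.1.1

lemma column_subset_range (hB : B ⊆ TnV n) (t : ℕ) : column B t ⊆ range (n + 1 - t) := by
  intro y hy
  have := hB (mem_column.1 hy)
  simp only [TnV, mem_filter] at this
  rw [mem_range]; omega

lemma prevColumn_subset_range (hB : B ⊆ TnV n) (t : ℕ) : prevColumn B t ⊆ range (n + 2 - t) := by
  unfold prevColumn
  split_ifs
  · exact empty_subset _
  · exact (column_subset_range hB _).trans (range_subset_range.2 (by omega))

lemma column_comp1 (A : Finset (ℕ × ℕ)) (t : ℕ) : column (comp1 A) t = range #(column A t) := by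
  ext y
  simp only [mem_column, comp1, mem_biUnion, mem_image, mem_range, card_filter_fst_eq_card_column,
    Prod.mk.injEq]
  constructor
  · rintro ⟨s, -, z, hz, rfl, rfl⟩
    exact hz
  · intro hy
    obtain ⟨z, hz⟩ := card_pos.1 (Nat.zero_lt_of_lt hy)
    exact ⟨t, ⟨(t, z), mem_column.1 hz, rfl⟩, y, hy, rfl, rfl⟩

lemma prevColumn_comp1 (A : Finset (ℕ × ℕ)) (t : ℕ) :
    prevColumn (comp1 A) t = range #(prevColumn A t) := by
  unfold prevColumn; split_ifs <;> simp [column_comp1]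

lemma mem_nbhd {v : ℕ × ℕ} : v ∈ nbhd n B ↔ v.1 + v.2 ≤ n ∧ (v ∈ B ∨ ∃ u ∈ B, adj u v) := by
  simp only [nbhd, TnV, mem_filter, mem_product, mem_range]
  constructor
  · rintro ⟨⟨-, h⟩, hv⟩; exact ⟨h, hv⟩
  · rintro ⟨h, hv⟩; exact ⟨⟨⟨by omega, by omega⟩, h⟩, hv⟩

lemma nbhd_subset_TnV (n : ℕ) (B : Finset (ℕ × ℕ)) : nbhd n B ⊆ TnV n := filter_subset _ _

lemma column_nbhd (ht : t ≤ n) :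
    column (nbhd n B) t =
      nbhdColumn (n - t) (prevColumn B t) (column B t) (column B (t + 1)) := by
  ext y
  simp only [mem_column, mem_prevColumn, mem_nbhd, nbhdColumn, pathNbhd, extendUp, extendDown,
    mem_range, mem_inter, mem_union, mem_image, adj, Prod.exists]
  constructor
  · rintro ⟨hy, h⟩
    grind
  · rintro ⟨h, hy⟩
    grind

end Grid

theorem comp1_nbhd_le (n : ℕ) (A : Finset (ℕ × ℕ)) (hA : A ⊆ TnV n) :
    (nbhd n (comp1 A)).card ≤ (nbhd n A).card := by
  rw [card_eq_sum_card_column (nbhd_subset_TnV n _), card_eq_sum_card_column (nbhd_subset_TnV n A)]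
  refine sum_le_sum fun t ht => ?_
  have ht : t ≤ n := Nat.lt_succ_iff.1 (mem_range.1 ht)
  rw [column_nbhd ht, column_nbhd ht, prevColumn_comp1, column_comp1, column_comp1]
  exact card_nbhdColumn_range_le
    ((prevColumn_subset_range hA t).trans (range_subset_range.2 (by omega)))
    ((column_subset_range hA t).trans (range_subset_range.2 (by omega)))
    ((column_subset_range hA (t + 1)).trans (range_subset_range.2 (by omega)))
end

section
/- For any subset A of the vertices of the triangular grid graph T_n, the neighborhood of the 2-left-compression of A is no larger than the neighborhood of A: |N(C₂⁻(A))| ≤ |N(A)|. -/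
open Finset

def sec (B : Finset (ℕ × ℕ)) (t : ℕ) : Finset ℕ :=
  (B.filter (fun u => u.2 = t)).image Prod.fst

lemma mem_sec {B : Finset (ℕ × ℕ)} {t x : ℕ} : x ∈ sec B t ↔ (x, t) ∈ B := by
  simp only [sec, mem_image, mem_filter]
  constructor
  · rintro ⟨⟨a, b⟩, ⟨hu, h2⟩, h1⟩
    simp only at h1 h2
    subst h1; subst h2; exact hu
  · intro h; exact ⟨(x, t), ⟨h, rfl⟩, rfl⟩

lemma sec_card (B : Finset (ℕ × ℕ)) (t : ℕ) :
    (sec B t).card = (B.filter (fun u => u.2 = t)).card := by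
  apply card_image_of_injOn
  intro u hu v hv h
  rw [mem_coe, mem_filter] at hu hv
  exact Prod.ext h (hu.2.trans hv.2.symm)

lemma mem_TnV {n : ℕ} {v : ℕ × ℕ} : v ∈ TnV n ↔ v.1 + v.2 ≤ n := by
  simp only [TnV, mem_filter, mem_product, mem_range]
  omega

lemma mem_TnV' {n x t : ℕ} : (x, t) ∈ TnV n ↔ x + t ≤ n := mem_TnV

lemma card_eq_sum_sec {n : ℕ} {B : Finset (ℕ × ℕ)} (hB : B ⊆ TnV n) :
    B.card = ∑ t ∈ Finset.range (n+1), (sec B t).card := by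
  rw [card_eq_sum_card_fiberwise (f := Prod.snd) (t := range (n+1))
    (fun v hv => mem_range.mpr (by have := mem_TnV.mp (hB hv); omega))]
  exact sum_congr rfl fun t _ => (sec_card B t).symm

lemma mem_sec_nbhd {n : ℕ} {B : Finset (ℕ × ℕ)} {t x : ℕ} :
    x ∈ sec (nbhd n B) t ↔ x + t ≤ n ∧ ((x, t) ∈ B ∨ ∃ u ∈ B, adj u (x, t)) := by
  rw [mem_sec]
  simp only [nbhd, mem_filter, mem_TnV']

lemma sec_comp2 (A : Finset (ℕ × ℕ)) (t : ℕ) : sec (comp2 A) t = range (sec A t).card := by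
  ext x
  rw [mem_sec, mem_range, sec_card]
  simp only [comp2, mem_biUnion, mem_image, mem_range]
  constructor
  · rintro ⟨s, hs, y, hy, hxy⟩
    rw [Prod.mk.injEq] at hxy
    obtain ⟨rfl, rfl⟩ := hxy
    exact hy
  · intro hx
    have hne : (A.filter (fun u => u.2 = t)).Nonempty := card_pos.mp (by omega)
    obtain ⟨u, hu⟩ := hne
    rw [mem_filter] at hu
    exact ⟨t, ⟨u, hu.1, hu.2⟩, x, hx, rfl⟩


/-- If `S ⊆ [0,m]` is nonempty, spreading it one step left and right within `[0,m]`
gains at least one element (or fills the row). -/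
lemma lemA {m : ℕ} {S : Finset ℕ} (hS : S ⊆ range (m+1)) (hne : S.Nonempty) :
    min (m+1) (S.card + 1) ≤ ((S ∪ S.image (· + 1) ∪ S.image (· - 1)) ∩ range (m+1)).card := by
  set T := (S ∪ S.image (· + 1) ∪ S.image (· - 1)) ∩ range (m+1) with hT
  have memT : ∀ x, x < m + 1 →
      (x ∈ S ∨ (∃ y ∈ S, y + 1 = x) ∨ (∃ y ∈ S, y - 1 = x)) → x ∈ T := by
    intro x hx h
    rw [hT, mem_inter, mem_range]
    refine ⟨?_, hx⟩
    rw [mem_union, mem_union]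
    rcases h with h | h | h
    · exact Or.inl (Or.inl h)
    · exact Or.inl (Or.inr (mem_image.mpr h))
    · exact Or.inr (mem_image.mpr h)
  by_cases hfull : range (m+1) ⊆ T
  · exact le_trans (min_le_left _ _) (by simpa using card_le_card hfull)
  obtain ⟨g, hgR, hgT⟩ := not_subset.mp hfull
  have hgm : g < m + 1 := mem_range.mp hgR
  have hgS : g ∉ S := fun h => hgT (memT g hgm (Or.inl h))
  have hg1 : g + 1 ∉ S := fun h => hgT (memT g hgm (Or.inr (Or.inr ⟨g+1, h, by omega⟩)))
  set low := S.filter (· < g) with hlowdef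
  set high := S.filter (fun x => g < x) with hhighdef
  have h1 : low ∪ high = S := by
    ext x
    simp only [hlowdef, hhighdef, mem_union, mem_filter]
    constructor
    · rintro (⟨h, _⟩ | ⟨h, _⟩) <;> exact h
    · intro hx
      have hxg : x ≠ g := fun h => hgS (h ▸ hx)
      rcases lt_or_gt_of_ne hxg with h | h
      exacts [Or.inl ⟨hx, h⟩, Or.inr ⟨hx, h⟩]
  have h2 : Disjoint low high := by
    rw [disjoint_left]
    intro a ha hb
    rw [hlowdef, mem_filter] at ha
    rw [hhighdef, mem_filter] at hb
    omega
  have hsplit : low.card + high.card = S.card := by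
    rw [← card_union_of_disjoint h2, h1]
  rcases low.eq_empty_or_nonempty with hlow | hlow
  · -- every element of S is ≥ g+2
    have hgt : ∀ x ∈ S, g + 2 ≤ x := by
      intro x hx
      have hxg : x ≠ g := fun h => hgS (h ▸ hx)
      have hxg1 : x ≠ g + 1 := fun h => hg1 (h ▸ hx)
      have : ¬ x < g := fun h =>
        (eq_empty_iff_forall_notMem.mp hlow x) (mem_filter.mpr ⟨hx, h⟩)
      omega
    have haS : S.min' hne ∈ S := S.min'_mem hne
    have ham : S.min' hne ≤ m := by have := mem_range.mp (hS haS); omega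
    have haT : S.min' hne - 1 ∈ T := memT _ (by omega) (Or.inr (Or.inr ⟨_, haS, rfl⟩))
    have hnotin : S.min' hne - 1 ∉ S := by
      intro h
      have h3 := S.min'_le _ h
      have h4 := hgt _ haS
      omega
    have hsub : insert (S.min' hne - 1) S ⊆ T := by
      intro x hx
      rcases mem_insert.mp hx with h | h
      · exact h ▸ haT
      · exact memT x (mem_range.mp (hS h)) (Or.inl h)
    calc min (m+1) (S.card + 1) ≤ S.card + 1 := min_le_right _ _
      _ = (insert (S.min' hne - 1) S).card := (card_insert_of_notMem hnotin).symm
      _ ≤ T.card := card_le_card hsub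
  · have hMS : low.max' hlow ∈ S := (mem_filter.mp (low.max'_mem hlow)).1
    have hMg : low.max' hlow < g := (mem_filter.mp (low.max'_mem hlow)).2
    have hMT : low.max' hlow + 1 ∈ T := memT _ (by omega) (Or.inr (Or.inl ⟨_, hMS, rfl⟩))
    have hsub : insert (low.max' hlow + 1) (low ∪ high) ⊆ T := by
      intro x hx
      rcases mem_insert.mp hx with h | h
      · exact h ▸ hMT
      · have hxS : x ∈ S := h1 ▸ h
        exact memT x (mem_range.mp (hS hxS)) (Or.inl hxS)
    have hnotin : low.max' hlow + 1 ∉ low ∪ high := by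
      intro h
      rcases mem_union.mp h with h | h
      · have := low.le_max' _ h; omega
      · have := (mem_filter.mp h).2; omega
    calc min (m+1) (S.card + 1) ≤ S.card + 1 := min_le_right _ _
      _ = (insert (low.max' hlow + 1) (low ∪ high)).card := by
          rw [card_insert_of_notMem hnotin, card_union_of_disjoint h2, hsplit]
      _ ≤ T.card := card_le_card hsub

/-- If `S ⊆ [0,m+1]`, then `S` together with its left-shift meets `[0,m]` in at least
`min(m+1, |S|)` elements. -/
lemma lemB {m : ℕ} {S : Finset ℕ} (hS : S ⊆ range (m+2)) :
    min (m+1) S.card ≤ ((S ∪ S.image (· - 1)) ∩ range (m+1)).card := by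
  set T := (S ∪ S.image (· - 1)) ∩ range (m+1) with hT
  have memT : ∀ x, x < m + 1 → (x ∈ S ∨ ∃ y ∈ S, y - 1 = x) → x ∈ T := by
    intro x hx h
    rw [hT, mem_inter, mem_range, mem_union]
    refine ⟨?_, hx⟩
    rcases h with h | h
    · exact Or.inl h
    · exact Or.inr (mem_image.mpr h)
  by_cases hfull : range (m+1) ⊆ T
  · exact le_trans (min_le_left _ _) (by simpa using card_le_card hfull)
  obtain ⟨g, hgR, hgT⟩ := not_subset.mp hfull
  have hgm : g < m + 1 := mem_range.mp hgR
  have hgS : g ∉ S := fun h => hgT (memT g hgm (Or.inl h))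
  have hg1 : g + 1 ∉ S := fun h => hgT (memT g hgm (Or.inr ⟨g+1, h, by omega⟩))
  have hcard : S.card ≤ T.card := by
    apply card_le_card_of_injOn (fun x => if x < g then x else x - 1)
    · intro x hx
      have hxm : x < m + 2 := mem_range.mp (hS hx)
      have hxg : x ≠ g := fun h => hgS (h ▸ hx)
      have hxg1 : x ≠ g + 1 := fun h => hg1 (h ▸ hx)
      by_cases h : x < g
      · simp only [if_pos h]; exact memT x (by omega) (Or.inl hx)
      · simp only [if_neg h]; exact memT (x - 1) (by omega) (Or.inr ⟨x, hx, rfl⟩)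
    · intro x hx y hy hxy
      rw [mem_coe] at hx hy
      have hxg : x ≠ g := fun h => hgS (h ▸ hx)
      have hyg : y ≠ g := fun h => hgS (h ▸ hy)
      have hxg1 : x ≠ g + 1 := fun h => hg1 (h ▸ hx)
      have hyg1 : y ≠ g + 1 := fun h => hg1 (h ▸ hy)
      simp only at hxy
      split_ifs at hxy <;> omega
  omega

/-- If `S ⊆ [0,m-1]` is nonempty, `S` with its right-shift inside `[0,m]` has at least
`|S|+1` elements. -/
lemma lemC {m : ℕ} {S : Finset ℕ} (hS : S ⊆ range m) (hne : S.Nonempty) :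
    min (m+1) (S.card + 1) ≤ ((S ∪ S.image (· + 1)) ∩ range (m+1)).card := by
  have hsub : insert (S.max' hne + 1) S ⊆ (S ∪ S.image (· + 1)) ∩ range (m+1) := by
    intro x hx
    rw [mem_inter, mem_union, mem_range]
    rcases mem_insert.mp hx with h | h
    · subst h
      refine ⟨Or.inr (mem_image.mpr ⟨_, S.max'_mem hne, rfl⟩), ?_⟩
      have := mem_range.mp (hS (S.max'_mem hne)); omega
    · exact ⟨Or.inl h, by have := mem_range.mp (hS h); omega⟩
  have hni : S.max' hne + 1 ∉ S := fun h => by have := S.le_max' _ h; omega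
  calc min (m+1) (S.card + 1) ≤ S.card + 1 := min_le_right _ _
    _ = _ := (card_insert_of_notMem hni).symm
    _ ≤ _ := card_le_card hsub

lemma incl1 {n t : ℕ} {A : Finset (ℕ × ℕ)} (ht : t ≤ n) :
    (sec A t ∪ (sec A t).image (· + 1) ∪ (sec A t).image (· - 1)) ∩ range (n - t + 1) ⊆
      sec (nbhd n A) t := by
  intro x hx
  rw [mem_inter, mem_range] at hx
  obtain ⟨hx1, hx2⟩ := hx
  rw [mem_sec_nbhd]
  refine ⟨by omega, ?_⟩
  rcases mem_union.mp hx1 with h | h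
  · rcases mem_union.mp h with h | h
    · exact Or.inl (mem_sec.mp h)
    · obtain ⟨y, hy, hyx⟩ := mem_image.mp h
      exact Or.inr ⟨(y, t), mem_sec.mp hy, by simp [adj] <;> omega⟩
  · obtain ⟨y, hy, hyx⟩ := mem_image.mp h
    rcases Nat.eq_zero_or_pos y with rfl | hy0
    · refine Or.inl ?_
      rw [show x = 0 by omega]
      exact mem_sec.mp hy
    · exact Or.inr ⟨(y, t), mem_sec.mp hy, by simp [adj] <;> omega⟩

lemma incl2 {n t : ℕ} {A : Finset (ℕ × ℕ)} (ht : t ≤ n) (htpos : 0 < t) :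
    (sec A (t-1) ∪ (sec A (t-1)).image (· - 1)) ∩ range (n - t + 1) ⊆ sec (nbhd n A) t := by
  intro x hx
  rw [mem_inter, mem_range] at hx
  obtain ⟨hx1, hx2⟩ := hx
  rw [mem_sec_nbhd]
  refine ⟨by omega, Or.inr ?_⟩
  rcases mem_union.mp hx1 with h | h
  · exact ⟨(x, t-1), mem_sec.mp h, by simp [adj] <;> omega⟩
  · obtain ⟨y, hy, hyx⟩ := mem_image.mp h
    rcases Nat.eq_zero_or_pos y with rfl | hy0
    · exact ⟨(0, t-1), mem_sec.mp hy, by simp [adj] <;> omega⟩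
    · exact ⟨(y, t-1), mem_sec.mp hy, by simp [adj] <;> omega⟩

lemma incl3 {n t : ℕ} {A : Finset (ℕ × ℕ)} (ht : t ≤ n) :
    (sec A (t+1) ∪ (sec A (t+1)).image (· + 1)) ∩ range (n - t + 1) ⊆ sec (nbhd n A) t := by
  intro x hx
  rw [mem_inter, mem_range] at hx
  obtain ⟨hx1, hx2⟩ := hx
  rw [mem_sec_nbhd]
  refine ⟨by omega, Or.inr ?_⟩
  rcases mem_union.mp hx1 with h | h
  · exact ⟨(x, t+1), mem_sec.mp h, by simp [adj] <;> omega⟩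
  · obtain ⟨y, hy, hyx⟩ := mem_image.mp h
    exact ⟨(y, t+1), mem_sec.mp hy, by simp [adj] <;> omega⟩

/-- Row bound: max of contributions from rows `t`, `t-1`, `t+1`. -/
def Mt (A : Finset (ℕ × ℕ)) (t : ℕ) : ℕ :=
  max ((sec A t).card + min (sec A t).card 1)
    (max (sec A (t-1)).card ((sec A (t+1)).card + min (sec A (t+1)).card 1))

lemma secN_comp2_le {n t : ℕ} (A : Finset (ℕ × ℕ)) (ht : t ≤ n) :
    (sec (nbhd n (comp2 A)) t).card ≤ min (n - t + 1) (Mt A t) := by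
  have hsub : sec (nbhd n (comp2 A)) t ⊆ range (min (n - t + 1) (Mt A t)) := by
    intro x hx
    rw [mem_sec_nbhd] at hx
    obtain ⟨hxn, hx⟩ := hx
    rw [mem_range]
    have hxM : x < Mt A t := by
      rcases hx with hx | ⟨u, hu, hadj⟩
      · have hx' : x < (sec A t).card := by
          have := mem_sec.mpr hx
          rwa [sec_comp2, mem_range] at this
        unfold Mt; omega
      · obtain ⟨u1, u2⟩ := u
        have hu1 : u1 < (sec A u2).card := by
          have := mem_sec.mpr hu
          rwa [sec_comp2, mem_range] at this
        rcases hadj with ⟨h1, h2⟩ | ⟨h1, h2⟩ | ⟨h1, h2⟩ | ⟨h1, h2⟩ | ⟨h1, h2⟩ | ⟨h1, h2⟩ <;>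
          simp only at h1 h2
        · subst h2; unfold Mt; omega
        · subst h2; unfold Mt; omega
        · have hu2 : u2 = t - 1 := by omega
          subst hu2; unfold Mt; omega
        · subst h1; unfold Mt; omega
        · subst h2; unfold Mt; omega
        · have hu2 : u2 = t - 1 := by omega
          subst hu2; unfold Mt; omega
    omega
  have := card_le_card hsub
  simpa using this

lemma secN_A_ge {n t : ℕ} {A : Finset (ℕ × ℕ)} (hA : A ⊆ TnV n) (ht : t ≤ n) :
    min (n - t + 1) (Mt A t) ≤ (sec (nbhd n A) t).card := by
  have hsub0 : sec A t ⊆ range (n - t + 1) := by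
    intro x hx
    have := mem_TnV'.mp (hA (mem_sec.mp hx))
    rw [mem_range]; omega
  have hb1 : min (n - t + 1) ((sec A t).card + min (sec A t).card 1) ≤
      (sec (nbhd n A) t).card := by
    rcases Finset.eq_empty_or_nonempty (sec A t) with h | h
    · have h0 : (sec A t).card = 0 := by simp [h]
      omega
    · have hlem := lemA (m := n - t) hsub0 h
      have hle := card_le_card (incl1 (n := n) (A := A) (t := t) ht)
      have hpos : 0 < (sec A t).card := card_pos.mpr h
      omega
  have hb2 : min (n - t + 1) (sec A (t-1)).card ≤ (sec (nbhd n A) t).card := by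
    rcases Nat.eq_zero_or_pos t with rfl | htpos
    · simp only [Nat.zero_sub] at *
      omega
    · have hsubm : sec A (t-1) ⊆ range (n - t + 2) := by
        intro x hx
        have := mem_TnV'.mp (hA (mem_sec.mp hx))
        rw [mem_range]; omega
      have hlem := lemB (m := n - t) hsubm
      have hle := card_le_card (incl2 (n := n) (A := A) (t := t) ht htpos)
      omega
  have hb3 : min (n - t + 1) ((sec A (t+1)).card + min (sec A (t+1)).card 1) ≤
      (sec (nbhd n A) t).card := by
    rcases Finset.eq_empty_or_nonempty (sec A (t+1)) with h | h
    · have h0 : (sec A (t+1)).card = 0 := by simp [h]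
      omega
    · have hsubp : sec A (t+1) ⊆ range (n - t) := by
        intro x hx
        have := mem_TnV'.mp (hA (mem_sec.mp hx))
        rw [mem_range]; omega
      have hlem := lemC (m := n - t) hsubp h
      have hle := card_le_card (incl3 (n := n) (A := A) (t := t) ht)
      have hpos : 0 < (sec A (t+1)).card := card_pos.mpr h
      omega
  unfold Mt
  omega

theorem comp2_nbhd_le (n : ℕ) (A : Finset (ℕ × ℕ)) (hA : A ⊆ TnV n) :
    (nbhd n (comp2 A)).card ≤ (nbhd n A).card := by
  have h1 : nbhd n (comp2 A) ⊆ TnV n := filter_subset _ _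
  have h2 : nbhd n A ⊆ TnV n := filter_subset _ _
  rw [card_eq_sum_sec h1, card_eq_sum_sec h2]
  apply Finset.sum_le_sum
  intro t htm
  have ht : t ≤ n := by have := mem_range.mp htm; omega
  exact le_trans (secN_comp2_le A ht) (secN_A_ge hA ht)
end

section
/- In the triangular grid graph T_n, a final segment D of the simplicial ordering satisfying 1+2+...+j < |D| (where j is the largest integer with 1+2+...+j < (n+1)(n+2)/4) has vertex boundary of size at most j+2. -/
lemma two_mul_card_TnV (n : ℕ) : 2 * (TnV n).card = (n+1) * (n+2) := by
  have h : TnV n = (Finset.range (n+1)).biUnion (fun s => Finset.HasAntidiagonal.antidiagonal s) := by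
    ext ⟨a, b⟩
    simp only [TnV, Finset.mem_filter, Finset.mem_product, Finset.mem_range,
      Finset.mem_biUnion, Finset.HasAntidiagonal.mem_antidiagonal]
    constructor
    · rintro ⟨⟨ha, hb⟩, hab⟩
      exact ⟨a + b, by omega, rfl⟩
    · rintro ⟨s, hs, hab⟩
      omega
  rw [h, Finset.card_biUnion]
  · have h1 : ∀ s ∈ Finset.range (n+1), (Finset.HasAntidiagonal.antidiagonal s).card = s + 1 := by
      intro s _; exact Finset.Nat.card_antidiagonal s
    rw [Finset.sum_congr rfl h1]
    have h2 : ∑ s ∈ Finset.range (n+2), s = ∑ s ∈ Finset.range (n+1), (s + 1) := by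
      rw [Finset.sum_range_succ' (fun i => i) (n+1)]
      omega
    have h3 := Finset.sum_range_id_mul_two (n+2)
    have e : n + 2 - 1 = n + 1 := rfl
    rw [h2, e] at h3
    nlinarith [h3]
  · intro x _ y _ hxy
    simp only [Finset.disjoint_left, Finset.HasAntidiagonal.mem_antidiagonal]
    intro p hp hp2
    exact hxy (by omega)

theorem final_segment_boundary_le (n j : ℕ) (hn : 1 ≤ n)
    (hj1 : 4 * ∑ i ∈ Finset.range (j + 1), i < (n + 1) * (n + 2))
    (hj2 : ¬ (4 * ∑ i ∈ Finset.range (j + 2), i < (n + 1) * (n + 2)))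
    (D : Finset (ℕ × ℕ)) (hD : IsFinalSeg n D)
    (hcard : ∑ i ∈ Finset.range (j + 1), i < D.card) :
    (boundary n D).card ≤ j + 2 := by
  classical
  obtain ⟨hD1, hD2⟩ := hD
  set C := TnV n \ D with hCdef
  by_cases hCe : C.Nonempty
  · obtain ⟨w₀, hw₀C, hmax⟩ := Finset.exists_max_image C (fun v => v.1 + v.2) hCe
    set m := w₀.1 + w₀.2 with hm
    have hw₀T : w₀ ∈ TnV n := (Finset.mem_sdiff.1 hw₀C).1
    have hw₀D : w₀ ∉ D := (Finset.mem_sdiff.1 hw₀C).2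
    have hnotD : ∀ u ∈ TnV n, sle u w₀ → u ∉ D := fun u hu hs hud => hw₀D (hD2 u hud w₀ hw₀T hs)
    have hsumD : ∀ u ∈ D, m ≤ u.1 + u.2 := by
      intro u hu
      by_contra h
      exact hnotD u (hD1 hu) (Or.inl (by omega)) hu
    have hbd : ∀ v ∈ boundary n D, v ∉ D ∧ v.1 + v.2 ≤ m ∧ m ≤ v.1 + v.2 + 1 ∧ v ∈ TnV n := by
      intro v hv
      rw [boundary, Finset.mem_filter] at hv
      obtain ⟨hvT, hvD, u, huD, hadj⟩ := hv
      have hvC : v ∈ C := Finset.mem_sdiff.2 ⟨hvT, hvD⟩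
      have h1 : v.1 + v.2 ≤ m := hmax v hvC
      have h2 : u.1 + u.2 ≤ v.1 + v.2 + 1 := by
        unfold adj at hadj
        rcases hadj with h|h|h|h|h|h <;> omega
      exact ⟨hvD, h1, le_trans (hsumD u huD) h2, hvT⟩
    have key : ∀ v ∈ boundary n D, ∀ w ∈ boundary n D,
        v.1 = w.1 → v.1 + v.2 = m → w.1 + w.2 + 1 = m → False := by
      intro v hv w hw h1 h2 h3
      obtain ⟨hvD, _, _, hvT⟩ := hbd v hv
      rw [boundary, Finset.mem_filter] at hw
      obtain ⟨hwT, hwD, u, huD, hadj⟩ := hw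
      have hum : m ≤ u.1 + u.2 := hsumD u huD
      unfold adj at hadj
      rcases hadj with h|h|h|h|h|h
      · omega
      · exact hvD (hD2 u huD v hvT (Or.inr ⟨by omega, by omega⟩))
      · omega
      · have huv : u = v := Prod.ext (by omega) (by omega)
        exact hvD (huv ▸ huD)
      · omega
      · omega
    have hinj : (boundary n D).card ≤ (Finset.range (m+1)).card := by
      apply Finset.card_le_card_of_injOn (fun v => v.1)
      · intro v hv
        obtain ⟨_, h1, _, _⟩ := hbd v hv
        exact Finset.mem_range.2 (by simp only []; omega)
      · intro v hv w hw hvw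
        replace hv : v ∈ boundary n D := hv
        replace hw : w ∈ boundary n D := hw
        replace hvw : v.1 = w.1 := hvw
        obtain ⟨_, hv1, hv2, _⟩ := hbd v hv
        obtain ⟨_, hw1, hw2, _⟩ := hbd w hw
        by_cases hE : v.1 + v.2 = w.1 + w.2
        · exact Prod.ext hvw (by omega)
        · rcases Nat.lt_or_ge (v.1 + v.2) (w.1 + w.2) with hlt | hge
          · exact (key w hw v hv hvw.symm (by omega) (by omega)).elim
          · exact (key v hv w hw hvw (by omega) (by omega)).elim
    rw [Finset.card_range] at hinj
    have hmn : m ≤ n := by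
      have := (Finset.mem_filter.1 hw₀T).2
      omega
    have hmj : m ≤ j + 1 := by
      by_contra hmj
      push_neg at hmj
      have hsub : insert w₀ (TnV (m-1)) ⊆ C := by
        intro v hv
        rcases Finset.mem_insert.1 hv with rfl | hv
        · exact hw₀C
        · have hvm : v.1 + v.2 ≤ m - 1 := (Finset.mem_filter.1 hv).2
          have hvT : v ∈ TnV n := by
            rw [TnV, Finset.mem_filter, Finset.mem_product]
            refine ⟨⟨?_, ?_⟩, ?_⟩ <;> first | (simp only [Finset.mem_range]; omega) | omega
          exact Finset.mem_sdiff.2 ⟨hvT, hnotD v hvT (Or.inl (by omega))⟩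
      have hw₀not : w₀ ∉ TnV (m-1) := by
        intro h
        have := (Finset.mem_filter.1 h).2
        omega
      have hcard2 : (TnV (m-1)).card + 1 ≤ C.card := by
        have := Finset.card_le_card hsub
        rwa [Finset.card_insert_of_notMem hw₀not] at this
      have hTm : 2 * (TnV (m-1)).card = m * (m+1) := by
        have h1 := two_mul_card_TnV (m-1)
        have e1 : m - 1 + 1 = m := by omega
        have e2 : m - 1 + 2 = m + 1 := by omega
        rw [e1, e2] at h1
        exact h1
      have hCD : C.card + D.card = (TnV n).card := Finset.card_sdiff_add_card_eq_card hD1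
      have hN : 2 * (TnV n).card = (n+1) * (n+2) := two_mul_card_TnV n
      have hj2' : (n+1) * (n+2) ≤ 4 * ∑ i ∈ Finset.range (j+2), i := le_of_not_gt hj2
      have hg1 : (∑ i ∈ Finset.range (j+1), i) * 2 = (j+1) * j := Finset.sum_range_id_mul_two (j+1)
      have hg2 : (∑ i ∈ Finset.range (j+2), i) * 2 = (j+2) * (j+1) := Finset.sum_range_id_mul_two (j+2)
      have hmm : (j+2) * (j+3) ≤ m * (m+1) := Nat.mul_le_mul (by omega) (by omega)
      nlinarith [hcard2, hTm, hCD, hN, hj2', hcard, hg1, hg2, hmm]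
    omega
  · have hsub : TnV n ⊆ D := by
      intro v hv
      by_contra hvD
      exact hCe ⟨v, Finset.mem_sdiff.2 ⟨hv, hvD⟩⟩
    have hb : boundary n D = ∅ := by
      apply Finset.eq_empty_of_forall_notMem
      intro v hv
      rw [boundary, Finset.mem_filter] at hv
      exact hv.2.1 (hsub hv.1)
    simp [hb]
end

section
/- If B ⊆ V(T_n) is i-left-compressed for i = 1,2, contains k ≥ 1 vertices on the diagonal {v : v1+v2 = n}, and its topmost diagonal vertex is y = (y1, y2) (so y1+y2 = n and y2 is maximal among diagonal members of B), then the vertex boundary of B has size at least n−k+1. -/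
/-- `B` is 1-left-compressed. -/
def LeftComp1 (B : Finset (ℕ × ℕ)) : Prop :=
  ∀ v ∈ B, ∀ w2 < v.2, (v.1, w2) ∈ B

/-- `B` is 2-left-compressed. -/
def LeftComp2 (B : Finset (ℕ × ℕ)) : Prop :=
  ∀ v ∈ B, ∀ w1 < v.1, (w1, v.2) ∈ B

section TriangularGrid

variable {n : ℕ} {B : Finset (ℕ × ℕ)}

lemma mem_TnV_iff {v : ℕ × ℕ} : v ∈ TnV n ↔ v.1 + v.2 ≤ n := by
  simp only [TnV, Finset.mem_filter, Finset.mem_product, Finset.mem_range]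
  omega

lemma mem_boundary_of_adj {u v : ℕ × ℕ} (hu : u ∈ B) (hv : v ∉ B) (hvn : v.1 + v.2 ≤ n)
    (huv : adj u v) : v ∈ boundary n B :=
  Finset.mem_filter.2 ⟨mem_TnV_iff.2 hvn, hv, u, hu, huv⟩

lemma mem_of_le_of_compressed (h1 : LeftComp1 B) (h2 : LeftComp2 B) {v w : ℕ × ℕ} (hv : v ∈ B)
    (hw1 : w.1 ≤ v.1) (hw2 : w.2 ≤ v.2) : w ∈ B := by
  obtain ⟨a, b⟩ := w
  simp only at hw1 hw2
  have hcol : (a, v.2) ∈ B := by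
    rcases hw1.lt_or_eq with hlt | rfl
    · exact h2 v hv _ hlt
    · exact hv
  rcases hw2.lt_or_eq with hlt | rfl
  · exact h1 _ hcol _ hlt
  · exact hcol

lemma lt_of_mem_of_notMem_col (h1 : LeftComp1 B) {j s t : ℕ} (hs : (j, s) ∈ B)
    (ht : (j, t) ∉ B) : s < t := by
  by_contra! hts
  rcases hts.lt_or_eq with hlt | rfl
  · exact ht (h1 _ hs _ hlt)
  · exact ht hs

noncomputable def rowGap (B : Finset (ℕ × ℕ)) (r : ℕ) : ℕ := sInf {s | (s, r) ∉ B}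

noncomputable def colGap (B : Finset (ℕ × ℕ)) (j : ℕ) : ℕ := sInf {t | (j, t) ∉ B}

lemma rowGap_mem_boundary {r a : ℕ} (h0 : (0, r) ∈ B) (ha : (a, r) ∉ B) (han : a + r ≤ n) :
    (rowGap B r, r) ∈ boundary n B := by
  have hgap : (rowGap B r, r) ∉ B := Nat.sInf_mem (s := {s | (s, r) ∉ B}) ⟨a, ha⟩
  have hle : rowGap B r ≤ a := Nat.sInf_le ha
  have hpos : rowGap B r ≠ 0 := fun h => hgap (h ▸ h0)
  have hprev : (rowGap B r - 1, r) ∈ B :=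
    not_not.1 (Nat.notMem_of_lt_sInf (s := {s | (s, r) ∉ B}) (by unfold rowGap at hpos ⊢; omega))
  exact mem_boundary_of_adj hprev hgap (by simp only; omega) (Or.inl ⟨by simp only; omega, rfl⟩)

lemma colGap_mem_boundary {j a : ℕ} (h0 : (j, 0) ∈ B) (ha : (j, a) ∉ B) (han : j + a ≤ n) :
    (j, colGap B j) ∈ boundary n B := by
  have hgap : (j, colGap B j) ∉ B := Nat.sInf_mem (s := {t | (j, t) ∉ B}) ⟨a, ha⟩
  have hle : colGap B j ≤ a := Nat.sInf_le ha
  have hpos : colGap B j ≠ 0 := fun h => hgap (h ▸ h0)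
  have hprev : (j, colGap B j - 1) ∈ B :=
    not_not.1 (Nat.notMem_of_lt_sInf (s := {t | (j, t) ∉ B}) (by unfold colGap at hpos ⊢; omega))
  exact mem_boundary_of_adj hprev hgap (by simp only; omega)
    (Or.inr (Or.inr (Or.inl ⟨by simp only; omega, rfl⟩)))

lemma card_diag_eq_card_rows {m : ℕ} (hmn : m ≤ n) (hm : ∀ v ∈ B, v.1 + v.2 = n → v.2 ≤ m) :
    (B.filter (fun v => v.1 + v.2 = n)).card =
      ((Finset.range (m + 1)).filter (fun r => (n - r, r) ∈ B)).card := by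
  have himage : B.filter (fun v => v.1 + v.2 = n) =
      ((Finset.range (m + 1)).filter (fun r => (n - r, r) ∈ B)).image (fun r => (n - r, r)) := by
    ext ⟨a, b⟩
    simp only [Finset.mem_filter, Finset.mem_image, Finset.mem_range, Prod.mk.injEq]
    constructor
    · rintro ⟨hv, hdiag⟩
      have hb : b ≤ m := hm _ hv hdiag
      refine ⟨b, ⟨by omega, ?_⟩, by omega, rfl⟩
      rwa [show n - b = a by omega]
    · rintro ⟨r, ⟨hrm, hr⟩, rfl, rfl⟩
      exact ⟨hr, by omega⟩
  rw [himage, Finset.card_image_of_injective _ fun r s h => (Prod.mk.inj h).2]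

lemma colGap_mem_boundary_of_topmost (h1 : LeftComp1 B) (h2 : LeftComp2 B) {y : ℕ × ℕ}
    (hy : y ∈ B) (hydiag : y.1 + y.2 = n) (hymax : ∀ v ∈ B, v.1 + v.2 = n → v.2 ≤ y.2)
    {j : ℕ} (hj : j < y.1) : (j, colGap B j) ∈ boundary n B ∧ y.2 < colGap B j := by
  have hjy : (j, y.2) ∈ B := mem_of_le_of_compressed h1 h2 hy hj.le le_rfl
  have hdiag : (j, n - j) ∉ B := fun h => by
    have := hymax _ h (by simp only; omega)
    simp only at this
    omega
  have hmem : (j, colGap B j) ∈ boundary n B :=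
    colGap_mem_boundary (mem_of_le_of_compressed h1 h2 hjy le_rfl (Nat.zero_le _)) hdiag
      (by omega)
  exact ⟨hmem, lt_of_mem_of_notMem_col h1 hjy (Finset.mem_filter.1 hmem).2.1⟩

end TriangularGrid

theorem compressed_diag_boundary_lower_general (n k : ℕ) (B : Finset (ℕ × ℕ))
    (h1 : LeftComp1 B) (h2 : LeftComp2 B)
    (hk : (B.filter (fun v => v.1 + v.2 = n)).card = k)
    (y : ℕ × ℕ) (hy : y ∈ B) (hydiag : y.1 + y.2 = n)
    (hymax : ∀ v ∈ B, v.1 + v.2 = n → v.2 ≤ y.2) :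
    n + 1 - k ≤ (boundary n B).card := by
  set R := (Finset.range (y.2 + 1)).filter (fun r => (n - r, r) ∉ B)
  have hR : R.card + k = y.2 + 1 := by
    rw [← hk, card_diag_eq_card_rows (by omega) hymax, add_comm,
      Finset.card_filter_add_card_filter_not, Finset.card_range]
  set rows := R.image fun r => (rowGap B r, r)
  set cols := (Finset.range y.1).image fun j => (j, colGap B j)
  have hrows : ∀ r ∈ R, (rowGap B r, r) ∈ boundary n B := by
    intro r hr
    simp only [R, Finset.mem_filter, Finset.mem_range] at hr
    exact rowGap_mem_boundary (mem_of_le_of_compressed h1 h2 hy (Nat.zero_le _) (by omega)) hr.2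
      (by omega)
  have hcols (j : ℕ) (hj : j < y.1) := colGap_mem_boundary_of_topmost h1 h2 hy hydiag hymax hj
  have hdisj : Disjoint rows cols := by
    simp only [rows, cols, R, Finset.disjoint_left, Finset.mem_image, Finset.mem_filter,
      Finset.mem_range, not_exists, not_and]
    rintro _ ⟨r, ⟨hr, -⟩, rfl⟩ j hj h
    have := (hcols j hj).2
    simp only [Prod.mk.injEq] at h
    omega
  calc n + 1 - k = (rows ∪ cols).card := by
        rw [Finset.card_union_of_disjoint hdisj,
          Finset.card_image_of_injective _ fun r s h => (Prod.mk.inj h).2,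
          Finset.card_image_of_injective _ fun r s h => (Prod.mk.inj h).1, Finset.card_range]
        omega
    _ ≤ (boundary n B).card := Finset.card_le_card <| Finset.union_subset
        (Finset.image_subset_iff.2 hrows)
        (Finset.image_subset_iff.2 fun j hj => (hcols j (Finset.mem_range.1 hj)).1)

theorem compressed_diag_boundary_lower (n k : ℕ) (B : Finset (ℕ × ℕ))
    (hB : B ⊆ TnV n) (h1 : LeftComp1 B) (h2 : LeftComp2 B)
    (hk : (B.filter (fun v => v.1 + v.2 = n)).card = k) (hk1 : 1 ≤ k)
    (y : ℕ × ℕ) (hy : y ∈ B) (hydiag : y.1 + y.2 = n)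
    (hymax : ∀ v ∈ B, v.1 + v.2 = n → v.2 ≤ y.2)
    (hne : B ≠ TnV n) :
    n + 1 - k ≤ (boundary n B).card :=
  compressed_diag_boundary_lower_general n k B h1 h2 hk y hy hydiag hymax
end

section
/- For positive integers n, the inspection number of the triangular grid graph satisfies In(T_n) > n/√2, assuming: (a) the adapted boundary lemma (if In(G) ≤ m then for each 0 ≤ i ≤ |V(G)|−1 there is D with i < |D| < i+m and |∂_G(D)| < m), and (b) the fact that for m = ⌊n/√2⌋ and i = (m+1)+...+(n+1), every D ⊆ V(T_n) with i < |D| < i+m has |∂_{T_n}(D)| ≥ m. -/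
lemma card_TnV (n : ℕ) : (TnV n).card = ∑ k ∈ Finset.Icc 1 (n+1), k := by
  classical
  rw [TnV, Finset.card_filter, Finset.sum_product]
  have h1 : ∀ a ∈ Finset.range (n+1),
      (∑ b ∈ Finset.range (n+1), if a + b ≤ n then 1 else 0) = n + 1 - a := by
    intro a ha
    rw [Finset.mem_range] at ha
    rw [← Finset.card_filter]
    have : (Finset.range (n+1)).filter (fun b => a + b ≤ n) = Finset.range (n+1-a) := by
      ext b; simp only [Finset.mem_filter, Finset.mem_range]; omega
    rw [this]; simp
  rw [Finset.sum_congr rfl h1]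
  have h2 := Finset.sum_range_reflect (fun j => j + 1) (n+1)
  have h3 : ∀ j ∈ Finset.range (n+1), (n + 1 - 1 - j) + 1 = n + 1 - j := by
    intro j hj; rw [Finset.mem_range] at hj; omega
  rw [Finset.sum_congr rfl h3] at h2
  rw [h2, ← Finset.Ico_add_one_right_eq_Icc 1 (n+1), Finset.sum_Ico_eq_sum_range]
  simp [Nat.add_comm]

theorem inspection_number_lower (n In : ℕ) (hn : 0 < n)
    (ha : ∀ m : ℕ, In ≤ m → ∀ i : ℕ, i ≤ (TnV n).card - 1 →
      ∃ D : Finset (ℕ × ℕ), D ⊆ TnV n ∧ i < D.card ∧ D.card < i + m ∧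
        (boundary n D).card < m)
    (hb : ∀ D : Finset (ℕ × ℕ), D ⊆ TnV n →
      (∑ k ∈ Finset.Icc (⌊(n : ℝ) / Real.sqrt 2⌋₊ + 1) (n + 1), k) < D.card →
      D.card < (∑ k ∈ Finset.Icc (⌊(n : ℝ) / Real.sqrt 2⌋₊ + 1) (n + 1), k) +
        ⌊(n : ℝ) / Real.sqrt 2⌋₊ →
      ⌊(n : ℝ) / Real.sqrt 2⌋₊ ≤ (boundary n D).card) :
    (n : ℝ) / Real.sqrt 2 < In := by
  by_contra h
  push_neg at h
  set m := ⌊(n : ℝ) / Real.sqrt 2⌋₊ with hm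
  have hInm : In ≤ m := Nat.le_floor h
  rcases Nat.eq_zero_or_pos m with hm0 | hm1
  · obtain ⟨D, _, h1, h2, _⟩ := ha m hInm 0 (Nat.zero_le _)
    omega
  · have hsqrt : (1:ℝ) ≤ Real.sqrt 2 := by
      rw [show (1:ℝ) = Real.sqrt 1 by simp]
      exact Real.sqrt_le_sqrt (by norm_num)
    have hmn : m ≤ n := by
      have : (n : ℝ) / Real.sqrt 2 ≤ (n : ℝ) :=
        div_le_self (by positivity) hsqrt
      calc m ≤ ⌊(n : ℝ)⌋₊ := Nat.floor_mono this
        _ = n := Nat.floor_natCast n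
    set i := ∑ k ∈ Finset.Icc (m + 1) (n + 1), k with hi
    have hsplit : (∑ k ∈ Finset.Icc 1 m, k) + i = ∑ k ∈ Finset.Icc 1 (n+1), k := by
      rw [hi, ← Finset.Ico_add_one_right_eq_Icc 1 m, ← Finset.Ico_add_one_right_eq_Icc (m+1) (n+1),
        ← Finset.Ico_add_one_right_eq_Icc 1 (n+1)]
      exact Finset.sum_Ico_consecutive _ (by omega) (by omega)
    have h1m : 1 ≤ ∑ k ∈ Finset.Icc 1 m, k :=
      Finset.single_le_sum (f := fun k => k) (fun _ _ => Nat.zero_le _)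
        (Finset.mem_Icc.mpr ⟨le_refl 1, hm1⟩)
    have hile : i ≤ (TnV n).card - 1 := by
      rw [card_TnV]; omega
    obtain ⟨D, hD, h1, h2, h3⟩ := ha m hInm i hile
    have := hb D hD h1 h2
    omega
end

section
/- In the Lions and Contamination game on any finite graph G, if L lions have a winning strategy (a finite sequence of simultaneous single-edge-or-stay moves clearing all contamination), then the inspection number of G satisfies In(G) ≤ 2L. Consequently L(G) ≥ In(G)/2. -/
/-- `lionContam G P t v` : vertex `v` is contaminated after turn `t`, when the
lions move according to `P`. Initially every unoccupied vertex is contaminated;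
each turn contamination spreads along every edge not traversed by a lion that
turn, and a vertex occupied by a lion is clear. -/
def lionContam {V : Type*} (G : SimpleGraph V) {L : ℕ} (P : ℕ → Fin L → V) :
    ℕ → V → Prop
  | 0, v => ∀ j, P 0 j ≠ v
  | (t+1), v => (∀ j, P (t+1) j ≠ v) ∧
      (lionContam G P t v ∨ ∃ u, lionContam G P t u ∧ G.Adj u v ∧
        ¬ ∃ j, (P t j = u ∧ P (t+1) j = v) ∨ (P t j = v ∧ P (t+1) j = u))

/-- `L` lions have a winning strategy in the Lions and Contamination game on `G`. -/
def lionClears {V : Type*} (G : SimpleGraph V) (L : ℕ) : Prop :=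
  ∃ (P : ℕ → Fin L → V) (T : ℕ),
    (∀ t j, P (t+1) j = P t j ∨ G.Adj (P t j) (P (t+1) j)) ∧
    ∀ v, ¬ lionContam G P T v

/-- The searcher wins the Zero-Visibility `k`-Search game on `G`:
some finite sequence of searches of at most `k` vertices per turn catches every
intruder trajectory (which moves along an edge or stays put each turn). -/
def searchWins {V : Type*} [DecidableEq V] (G : SimpleGraph V) (k : ℕ) : Prop :=
  ∃ (S : ℕ → Finset V) (T : ℕ),
    (∀ t, (S t).card ≤ k) ∧
    ∀ w : ℕ → V, (∀ t, w (t+1) = w t ∨ G.Adj (w t) (w (t+1))) →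
      ∃ t < T, w t ∈ S t

/-!
Searching, at turn `t`, the lion positions before and after the lions' `t`-th move
catches every intruder: an intruder who escapes the searches up to turn `t` sits on a
contaminated vertex after turn `t`, since it never shares a vertex with a lion and never
crosses an edge that a lion traverses in the same turn. The lions clear every
vertex, so no intruder escapes, and each search has at most `2 L` vertices.
-/

open Finset

section LionSearch

variable {V : Type*} [DecidableEq V] (G : SimpleGraph V) {L : ℕ} (P : ℕ → Fin L → V)

def lionSearch (t : ℕ) : Finset V :=
  univ.image (P t) ∪ univ.image (P (t + 1))

lemma card_lionSearch_le (t : ℕ) : (lionSearch P t).card ≤ 2 * L :=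
  calc (lionSearch P t).card
      ≤ (univ.image (P t)).card + (univ.image (P (t + 1))).card := card_union_le _ _
    _ ≤ L + L := by
        gcongr <;> exact card_image_le.trans (card_univ.trans (Fintype.card_fin L)).le
    _ = 2 * L := (two_mul L).symm

lemma lionContam_of_forall_notMem_lionSearch {w : ℕ → V}
    (hw : ∀ t, w (t + 1) = w t ∨ G.Adj (w t) (w (t + 1))) {T : ℕ}
    (hescape : ∀ t ≤ T, w t ∉ lionSearch P t) : ∀ t ≤ T, lionContam G P t (w t) := by
  have hfree : ∀ t ≤ T, (∀ j, P t j ≠ w t) ∧ ∀ j, P (t + 1) j ≠ w t := fun t ht => by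
    simpa [lionSearch, not_or] using hescape t ht
  intro t
  induction t with
  | zero => exact fun _ => (hfree 0 (Nat.zero_le _)).1
  | succ t ih =>
    intro ht
    have ht' : t ≤ T := Nat.le_of_succ_le ht
    refine ⟨(hfree (t + 1) ht).1, ?_⟩
    rcases hw t with hstay | hadj
    · exact Or.inl (hstay ▸ ih ht')
    · refine Or.inr ⟨w t, ih ht', hadj, ?_⟩
      rintro ⟨j, ⟨hfrom, -⟩ | ⟨-, hto⟩⟩
      · exact (hfree t ht').1 j hfrom
      · exact (hfree t ht').2 j hto

lemma searchWins_two_mul_of_lionClears (h : lionClears G L) :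
    searchWins G (2 * L) := by
  obtain ⟨P, T, -, hclear⟩ := h
  refine ⟨lionSearch P, T + 1, card_lionSearch_le P, fun w hw => ?_⟩
  by_contra! hescape
  exact hclear (w T) <| lionContam_of_forall_notMem_lionSearch G P hw
    (fun t ht => hescape t (Nat.lt_succ_of_le ht)) T le_rfl

end LionSearch

theorem inspection_le_two_lion_general {V : Type*} [DecidableEq V]
    (G : SimpleGraph V) (L : ℕ) (h : lionClears G L) :
    searchWins G (2 * L) ∧
    sInf {k | searchWins G k} ≤ 2 * sInf {L' | lionClears G L'} :=
  ⟨searchWins_two_mul_of_lionClears G h,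
    Nat.sInf_le <| searchWins_two_mul_of_lionClears G <|
      Nat.sInf_mem (s := {L' | lionClears G L'}) ⟨L, h⟩⟩

theorem inspection_le_two_lion {V : Type*} [Fintype V] [DecidableEq V]
    (G : SimpleGraph V) (L : ℕ) (h : lionClears G L) :
    searchWins G (2 * L) ∧
    sInf {k | searchWins G k} ≤ 2 * sInf {L' | lionClears G L'} :=
  inspection_le_two_lion_general G L h
end
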